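/- arXiv:1104.4186 — 3 statements merged into one kernel-verified Lean document; each statement's English description precedes it below -/
import Mathlib

section
/- For every θ ≥ 0, θ − 1 + ∫₀^∞ e^{-θr} · 3(1+2r)^{-5/2} dr = (1/√2) θ^{3/2} e^{θ/2} Γ(1/2, θ/2), where Γ(1/2, z) = ∫_z^∞ e^{-t} t^{-1/2} dt. -/
/-!
Differentiating `-e^{-θr} (1+2r)^{-p}` and integrating over `(0, ∞)` gives the recurrence
`θ J_p + 2p J_{p+1} = 1` for `J_p(θ) = ∫₀^∞ e^{-θr} (1+2r)^{-p} dr` (`laplaceInvPow p θ`).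
Used with `p = 3/2` and `p = 1/2` it turns the left-hand side into `θ² J_{1/2}(θ)`, while the
substitution `t = (θ/2)(1+2r)` gives `Γ(1/2, θ/2) = θ e^{-θ/2} (θ/2)^{-1/2} J_{1/2}(θ)`.
-/

open MeasureTheory Real

/-- The upper incomplete gamma function `Γ(a,z) = ∫_z^∞ e^{-t} t^{a-1} dt`. -/
noncomputable def uincGamma (a z : ℝ) : ℝ := ∫ t in Set.Ioi z, Real.exp (-t) * t ^ (a - 1)

open Set Filter Topology

noncomputable def laplaceInvPow (p θ : ℝ) : ℝ :=
  ∫ r in Ioi 0, exp (-θ * r) * (1 + 2 * r) ^ (-p)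

section Recurrence

variable {θ p : ℝ}

theorem hasDerivAt_neg_exp_mul_rpow (θ p : ℝ) {r : ℝ} (hr : 0 < 1 + 2 * r) :
    HasDerivAt (fun r ↦ -(exp (-θ * r) * (1 + 2 * r) ^ (-p)))
      (θ * (exp (-θ * r) * (1 + 2 * r) ^ (-p))
        + 2 * p * (exp (-θ * r) * (1 + 2 * r) ^ (-(p + 1)))) r := by
  have hexp : HasDerivAt (fun r ↦ exp (-θ * r)) (exp (-θ * r) * (-θ)) r := by
    simpa using ((hasDerivAt_id r).const_mul (-θ)).exp
  have hlin : HasDerivAt (fun r : ℝ ↦ 1 + 2 * r) 2 r := by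
    simpa using ((hasDerivAt_id r).const_mul 2).const_add 1
  have h := (hexp.mul (hlin.rpow_const (p := -p) (Or.inl hr.ne'))).neg
  rw [show -p - 1 = -(p + 1) by ring] at h
  exact h.congr_deriv (by ring)

theorem tendsto_exp_mul_rpow_atTop (hθ : 0 ≤ θ) (hp : 0 < p) :
    Tendsto (fun r ↦ -(exp (-θ * r) * (1 + 2 * r) ^ (-p))) atTop (𝓝 0) := by
  have hpow : Tendsto (fun r : ℝ ↦ (1 + 2 * r) ^ (-p)) atTop (𝓝 0) :=
    (tendsto_rpow_neg_atTop hp).comp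
      (tendsto_atTop_add_const_left _ _ (tendsto_id.const_mul_atTop two_pos))
  rw [← neg_zero]
  refine (squeeze_zero' ?_ ?_ hpow).neg <;>
    filter_upwards [eventually_ge_atTop 0] with r hr
  · positivity
  · exact mul_le_of_le_one_left (by positivity) (exp_le_one_iff.2 (by nlinarith))

theorem mul_laplaceInvPow_add (hθ : 0 ≤ θ) (hp : 0 < p) :
    θ * laplaceInvPow p θ + 2 * p * laplaceInvPow (p + 1) θ = 1 := by
  have hderiv : ∀ r ∈ Ici (0 : ℝ),
      HasDerivAt (fun r ↦ -(exp (-θ * r) * (1 + 2 * r) ^ (-p)))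
      (θ * (exp (-θ * r) * (1 + 2 * r) ^ (-p))
        + 2 * p * (exp (-θ * r) * (1 + 2 * r) ^ (-(p + 1)))) r :=
    fun r hr ↦ hasDerivAt_neg_exp_mul_rpow θ p (by simp only [mem_Ici] at hr; linarith)
  have hnonneg : ∀ q c : ℝ, 0 ≤ c → 0 ≤ᵐ[volume.restrict (Ioi 0)]
      fun r : ℝ ↦ c * (exp (-θ * r) * (1 + 2 * r) ^ (-q)) := fun q c hc ↦ by
    filter_upwards [ae_restrict_mem measurableSet_Ioi] with r (hr : (0 : ℝ) < r)
    positivity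
  have hlim := tendsto_exp_mul_rpow_atTop hθ hp
  have hint := integrableOn_Ioi_deriv_of_nonneg' hderiv
    (fun r (hr : 0 < r) ↦ by positivity) hlim
  have hmeas : AEStronglyMeasurable (fun r : ℝ ↦ θ * (exp (-θ * r) * (1 + 2 * r) ^ (-p)))
      (volume.restrict (Ioi 0)) := by
    have hbase : ContinuousOn (fun r : ℝ ↦ (1 + 2 * r) ^ (-p)) (Ioi 0) :=
      (by fun_prop : Continuous fun r : ℝ ↦ 1 + 2 * r).continuousOn.rpow_const
        fun r (hr : 0 < r) ↦ Or.inl (by positivity)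
    exact (continuousOn_const.mul ((by fun_prop : Continuous fun r : ℝ ↦ exp (-θ * r))
      |>.continuousOn.mul hbase)).aestronglyMeasurable measurableSet_Ioi
  obtain ⟨hint₁, hint₂⟩ := (integrable_add_iff_of_nonneg hmeas (hnonneg p θ hθ)
    (hnonneg (p + 1) (2 * p) (by positivity))).1 hint
  have := integral_Ioi_of_hasDerivAt_of_tendsto' hderiv hint hlim
  rw [integral_add hint₁ hint₂, integral_const_mul, integral_const_mul] at this
  simpa [laplaceInvPow] using this

end Recurrence

theorem setIntegral_Ioi_eq_mul_integral_comp_add_mul {E : Type*} [NormedAddCommGroup E]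
    [NormedSpace ℝ E] (g : ℝ → E) (z : ℝ) {c : ℝ} (hc : 0 < c) :
    ∫ t in Ioi z, g t = c • ∫ r in Ioi 0, g (z + c * r) := by
  rw [integral_comp_mul_left_Ioi (fun s ↦ g (z + s)) 0 hc, mul_zero, smul_inv_smul₀ hc.ne']
  conv_lhs => rw [← zero_add z, ← image_add_const_Ioi]
  simp_rw [add_comm z]
  exact ((measurePreserving_add_right volume z).setIntegral_image_emb
    (measurableEmbedding_addRight z) _ _)

theorem uincGamma_half_eq_mul_laplaceInvPow (a : ℝ) {θ : ℝ} (hθ : 0 < θ) :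
    uincGamma a (θ / 2) =
      θ * exp (-(θ / 2)) * (θ / 2) ^ (a - 1) * laplaceInvPow (1 - a) θ := by
  rw [uincGamma, setIntegral_Ioi_eq_mul_integral_comp_add_mul _ _ hθ, smul_eq_mul,
    laplaceInvPow, ← integral_const_mul, ← integral_const_mul]
  refine setIntegral_congr_fun measurableSet_Ioi fun r (hr : 0 < r) ↦ ?_
  rw [show θ / 2 + θ * r = θ / 2 * (1 + 2 * r) by ring, mul_rpow (by positivity) (by positivity),
    neg_sub, show -(θ / 2 * (1 + 2 * r)) = -(θ / 2) + -θ * r by ring, exp_add]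
  ring

/-- The Laplace exponent identity: for `θ ≥ 0`,
`θ − 1 + ∫₀^∞ e^{-θr} 3(1+2r)^{-5/2} dr = (1/√2) θ^{3/2} e^{θ/2} Γ(1/2, θ/2)`. -/
theorem laplace_exponent_formula (θ : ℝ) (hθ : 0 ≤ θ) :
    θ - 1 + ∫ r in Set.Ioi (0:ℝ), Real.exp (-θ * r) * ((3:ℝ) * (1 + 2*r) ^ (-(5:ℝ)/2))
      = (1 / Real.sqrt 2) * θ ^ ((3:ℝ)/2) * Real.exp (θ/2) * uincGamma ((1:ℝ)/2) (θ/2) := by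
  have hL : ∫ r in Ioi (0:ℝ), exp (-θ * r) * (3 * (1 + 2 * r) ^ (-(5:ℝ) / 2))
      = 3 * laplaceInvPow (5 / 2) θ := by
    rw [laplaceInvPow, ← integral_const_mul]
    congr 1 with r
    rw [neg_div]
    ring
  have h₁ := mul_laplaceInvPow_add hθ (p := 1 / 2) (by norm_num)
  have h₃ := mul_laplaceInvPow_add hθ (p := 3 / 2) (by norm_num)
  rw [show (1 / 2 + 1 : ℝ) = 3 / 2 by norm_num] at h₁
  rw [show (3 / 2 + 1 : ℝ) = 5 / 2 by norm_num] at h₃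
  rw [hL]
  rcases hθ.eq_or_lt with rfl | hθ
  · rw [zero_rpow (by norm_num)]
    linear_combination h₃
  have hexp : exp (θ / 2) * exp (-(θ / 2)) = 1 := by rw [← exp_add, add_neg_cancel, exp_zero]
  have hpow : 1 / √2 * θ ^ ((3:ℝ) / 2) * (θ / 2) ^ ((1:ℝ) / 2 - 1) = θ := by
    rw [div_rpow hθ.le zero_le_two, show (3:ℝ) / 2 = 1 + 1 / 2 by norm_num, rpow_add hθ,
      rpow_one, show (1:ℝ) / 2 - 1 = -(1 / 2) by norm_num, rpow_neg hθ.le, rpow_neg zero_le_two,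
      ← sqrt_eq_rpow, ← sqrt_eq_rpow]
    have : √θ ≠ 0 := by positivity
    field_simp
  rw [uincGamma_half_eq_mul_laplaceInvPow _ hθ, show (1:ℝ) - 1 / 2 = 1 / 2 by norm_num]
  set J := laplaceInvPow (1 / 2) θ
  linear_combination h₃ - θ * h₁ - θ * J * hpow
    - θ * J * (1 / √2 * θ ^ ((3:ℝ) / 2) * (θ / 2) ^ ((1:ℝ) / 2 - 1)) * hexp
end

section
/- Fix x ≥ 0 and define f : ℕ → ℝ by f(n) = L_{n-1}^{(3/2)}(x) for n ≥ 1 and f(0) = 0, where L_n^{(α)} denotes the generalized Laguerre polynomial. Then for every integer n ≥ 1, 2n[f(n+1) − f(n)] + (2n+1)[f(n−1) − f(n)] = −2x f(n). -/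
open Finset

/-- Generalized binomial coefficient `binom(a, k) = a(a−1)⋯(a−k+1)/k!`. -/
noncomputable def genBinom (a : ℝ) (k : ℕ) : ℝ :=
  (∏ j ∈ Finset.range k, (a - j)) / (k.factorial : ℝ)

/-- The generalized Laguerre polynomial
`L_n^{(α)}(x) = Σ_{i=0}^n (−1)^i binom(n+α, n−i) x^i / i!`. -/
noncomputable def laguerre (α : ℝ) (n : ℕ) (x : ℝ) : ℝ :=
  ∑ i ∈ Finset.range (n + 1),
    (-1:ℝ)^i * genBinom ((n:ℝ) + α) (n - i) * x ^ i / (i.factorial : ℝ)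

/-!
Pascal's rule for the binomial coefficients gives `L_{n+1}^{(α)} = L_{n+1}^{(α+1)} − L_n^{(α+1)}`,
and the absorption rule `(k+1) binom(a, k+1) = a binom(a−1, k)`, compared coefficientwise, gives
`(n+1) L_{n+1}^{(α)} + x L_n^{(α+1)} = (n+1+α) L_n^{(α)}`. Eliminating `L^{(α+1)}` between the two
yields the three-term recurrence, which at `α = 3/2` and with `f(n) = L_{n−1}^{(3/2)}(x)` is exactly
the claimed identity; at `n = 1` the convention `f(0) = 0` plays the role of `L_{−1} = 0`.
-/

lemma genBinom_zero (a : ℝ) : genBinom a 0 = 1 := by simp [genBinom]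

lemma succ_mul_genBinom_succ (a : ℝ) (k : ℕ) :
    ((k : ℝ) + 1) * genBinom a (k + 1) = a * genBinom (a - 1) k := by
  have hprod : ∏ j ∈ range (k + 1), (a - j) = (∏ j ∈ range k, (a - 1 - j)) * a := by
    rw [prod_range_succ']
    congr 1
    · exact prod_congr rfl fun j _ => by push_cast; ring
    · simp
  simp only [genBinom, hprod, Nat.factorial_succ, Nat.cast_mul, Nat.cast_succ]
  field_simp

lemma genBinom_add_one_succ (a : ℝ) (k : ℕ) :
    genBinom (a + 1) (k + 1) = genBinom a (k + 1) + genBinom a k := by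
  have hprod : ∏ j ∈ range (k + 1), (a + 1 - j) = (∏ j ∈ range k, (a - j)) * (a + 1) := by
    rw [prod_range_succ']
    congr 1
    · exact prod_congr rfl fun j _ => by push_cast; ring
    · simp
  simp only [genBinom, hprod, prod_range_succ, Nat.factorial_succ, Nat.cast_mul, Nat.cast_succ]
  field_simp
  ring

noncomputable def laguerreCoeff (α : ℝ) (n i : ℕ) : ℝ :=
  (-1) ^ i * genBinom (n + α) (n - i) / i.factorial

lemma laguerre_eq_sum_laguerreCoeff (α : ℝ) (n : ℕ) (x : ℝ) :
    laguerre α n x = ∑ i ∈ range (n + 1), laguerreCoeff α n i * x ^ i :=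
  sum_congr rfl fun i _ => by unfold laguerreCoeff; ring

lemma laguerre_zero (α x : ℝ) : laguerre α 0 x = 1 := by
  simp [laguerre, genBinom_zero]

lemma laguerreCoeff_self_eq (α β : ℝ) (n : ℕ) :
    laguerreCoeff α n n = laguerreCoeff β n n := by
  simp [laguerreCoeff, genBinom_zero]

lemma laguerreCoeff_succ_eq_sub {i n : ℕ} (α : ℝ) (hi : i ≤ n) :
    laguerreCoeff α (n + 1) i = laguerreCoeff (α + 1) (n + 1) i - laguerreCoeff (α + 1) n i := by
  have hsucc : n + 1 - i = n - i + 1 := by omega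
  have hpascal := genBinom_add_one_succ ((n + 1 : ℕ) + α) (n - i)
  simp only [laguerreCoeff, hsucc]
  push_cast at hpascal ⊢
  rw [show (n : ℝ) + 1 + (α + 1) = n + 1 + α + 1 by ring, hpascal,
    show (n : ℝ) + (α + 1) = n + 1 + α by ring]
  ring

lemma laguerre_succ_eq_sub (α x : ℝ) (n : ℕ) :
    laguerre α (n + 1) x = laguerre (α + 1) (n + 1) x - laguerre (α + 1) n x := by
  simp only [laguerre_eq_sum_laguerreCoeff]
  rw [sum_range_succ, sum_range_succ (n := n + 1), laguerreCoeff_self_eq α (α + 1),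
    sum_congr rfl fun i hi => by
      rw [laguerreCoeff_succ_eq_sub α (Nat.lt_succ_iff.mp (mem_range.mp hi)), sub_mul],
    sum_sub_distrib]
  ring

lemma succ_mul_laguerreCoeff_succ_zero (α : ℝ) (n : ℕ) :
    ((n : ℝ) + 1) * laguerreCoeff α (n + 1) 0 = (n + 1 + α) * laguerreCoeff α n 0 := by
  have habsorb := succ_mul_genBinom_succ ((n + 1 : ℕ) + α) n
  simp only [laguerreCoeff, Nat.sub_zero, pow_zero, Nat.factorial_zero, Nat.cast_one, div_one,
    one_mul]
  push_cast at habsorb ⊢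
  rw [habsorb]
  ring_nf

lemma succ_mul_laguerreCoeff_succ_succ {i n : ℕ} (α : ℝ) (hi : i < n) :
    ((n : ℝ) + 1) * laguerreCoeff α (n + 1) (i + 1) + laguerreCoeff (α + 1) n i
      = (n + 1 + α) * laguerreCoeff α n (i + 1) := by
  obtain ⟨k, rfl⟩ := Nat.exists_eq_add_of_lt hi
  have habsorb := succ_mul_genBinom_succ ((i + k + 1 + 1 : ℕ) + α) k
  simp only [laguerreCoeff, Nat.factorial_succ, pow_succ,
    show i + k + 1 + 1 - (i + 1) = k + 1 by omega, show i + k + 1 - i = k + 1 by omega,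
    show i + k + 1 - (i + 1) = k by omega]
  push_cast at habsorb ⊢
  rw [show (i : ℝ) + k + 1 + (α + 1) = i + k + 1 + 1 + α by ring,
    show (i : ℝ) + k + 1 + 1 + α - 1 = i + k + 1 + α by ring] at *
  field_simp
  linear_combination -habsorb

lemma succ_mul_laguerreCoeff_succ_self (α : ℝ) (n : ℕ) :
    ((n : ℝ) + 1) * laguerreCoeff α (n + 1) (n + 1) + laguerreCoeff (α + 1) n n = 0 := by
  simp only [laguerreCoeff, Nat.sub_self, genBinom_zero, Nat.factorial_succ, pow_succ]
  push_cast
  field_simp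
  ring

lemma succ_mul_laguerre_succ_add (α x : ℝ) (n : ℕ) :
    ((n : ℝ) + 1) * laguerre α (n + 1) x + x * laguerre (α + 1) n x
      = (n + 1 + α) * laguerre α n x := by
  have hmerge : ((n : ℝ) + 1) * laguerre α (n + 1) x + x * laguerre (α + 1) n x
      = (n + 1) * laguerreCoeff α (n + 1) 0 + ∑ i ∈ range (n + 1),
        ((n + 1) * laguerreCoeff α (n + 1) (i + 1) + laguerreCoeff (α + 1) n i) * x ^ (i + 1) := by
    rw [laguerre_eq_sum_laguerreCoeff α (n + 1), sum_range_succ', laguerre_eq_sum_laguerreCoeff,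
      mul_add, mul_sum, mul_sum, pow_zero, mul_one, add_comm _ (_ * laguerreCoeff α (n + 1) 0),
      add_assoc, ← sum_add_distrib]
    exact congrArg _ (sum_congr rfl fun i _ => by ring)
  rw [hmerge, sum_range_succ, succ_mul_laguerreCoeff_succ_self, zero_mul, add_zero,
    sum_congr rfl fun i hi => by rw [succ_mul_laguerreCoeff_succ_succ α (mem_range.mp hi)],
    succ_mul_laguerreCoeff_succ_zero, laguerre_eq_sum_laguerreCoeff, sum_range_succ' _ n]
  simp only [mul_add, mul_sum, pow_zero, mul_one, mul_assoc]
  ring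

lemma laguerre_three_term_recurrence (α x : ℝ) (m : ℕ) :
    ((m : ℝ) + 2) * laguerre α (m + 2) x
      = (2 * m + 3 + α - x) * laguerre α (m + 1) x - (m + 1 + α) * laguerre α m x := by
  have hnext := succ_mul_laguerre_succ_add α x (m + 1)
  have hcur := succ_mul_laguerre_succ_add α x m
  have hshift := laguerre_succ_eq_sub α x m
  push_cast at hnext
  linear_combination hnext + x * hshift - hcur

theorem laguerre_eigenfunction_of_gw_generator_general
    (x : ℝ) (f : ℕ → ℝ) (hf0 : f 0 = 0)
    (hf : ∀ n : ℕ, 1 ≤ n → f n = laguerre (3/2) (n - 1) x) :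
    ∀ n : ℕ, 1 ≤ n →
      2*(n:ℝ)*(f (n+1) - f n) + (2*(n:ℝ)+1)*(f (n-1) - f n) = -2*x*f n := by
  intro n hn
  obtain ⟨m, rfl⟩ := Nat.exists_eq_add_of_le' hn
  cases m with
  | zero =>
    have hfirst := succ_mul_laguerre_succ_add (3/2) x 0
    simp only [laguerre_zero] at hfirst
    rw [hf 2 (by norm_num), hf 1 le_rfl, Nat.sub_self, hf0, laguerre_zero]
    push_cast at hfirst ⊢
    linear_combination 2 * hfirst
  | succ m =>
    have hnext : f (m + 3) = laguerre (3/2) (m + 2) x := hf (m + 3) (by omega)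
    have hcur : f (m + 2) = laguerre (3/2) (m + 1) x := hf (m + 2) (by omega)
    have hprev : f (m + 1) = laguerre (3/2) m x := hf (m + 1) (by omega)
    simp only [Nat.add_sub_cancel, hnext, hcur, hprev]
    have hrec := laguerre_three_term_recurrence (3/2) x m
    push_cast
    linear_combination 2 * hrec

/-- With `f(n) = L_{n−1}^{(3/2)}(x)` for `n ≥ 1` and `f(0) = 0`, for every `n ≥ 1`,
`2n[f(n+1) − f(n)] + (2n+1)[f(n−1) − f(n)] = −2x f(n)`: the GW(−1) generator applied
to `f` equals `−2x f`. -/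
theorem laguerre_eigenfunction_of_gw_generator
    (x : ℝ) (hx : 0 ≤ x) (f : ℕ → ℝ) (hf0 : f 0 = 0)
    (hf : ∀ n : ℕ, 1 ≤ n → f n = laguerre (3/2) (n - 1) x) :
    ∀ n : ℕ, 1 ≤ n →
      2*(n:ℝ)*(f (n+1) - f n) + (2*(n:ℝ)+1)*(f (n-1) - f n) = -2*x*f n :=
  laguerre_eigenfunction_of_gw_generator_general x f hf0 hf
end

section
/- For x = 0, the function n ↦ L_{n-1}^{(3/2)}(0) = binom(n + 1/2, n − 1) (generalized binomial coefficient Γ(n+3/2)/(Γ(n−1+1)Γ(5/2)) appropriately normalized) is harmonic for the GW(−1) generator: for all n ≥ 1, 2n[f(n+1) − f(n)] + (2n+1)[f(n−1) − f(n)] = 0, where f(n) = Γ(n + 3/2)/(Γ(n)·Γ(5/2)) for n ≥ 1 and f(0) = 0. -/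
open Real

/-- The scale function `f(n) = Γ(n+3/2)/(Γ(n)Γ(5/2)) = binom(n+1/2, n−1)` for `n ≥ 1`,
`f(0) = 0`, is harmonic for the GW(−1) generator: for all `n ≥ 1`,
`2n[f(n+1) − f(n)] + (2n+1)[f(n−1) − f(n)] = 0`. -/
theorem scale_function_harmonic
    (f : ℕ → ℝ) (hf0 : f 0 = 0)
    (hf : ∀ n : ℕ, 1 ≤ n →
      f n = Real.Gamma ((n:ℝ) + 3/2) / (Real.Gamma (n:ℝ) * Real.Gamma (5/2))) :
    ∀ n : ℕ, 1 ≤ n →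
      2*(n:ℝ)*(f (n+1) - f n) + (2*(n:ℝ)+1)*(f (n-1) - f n) = 0 := by
  have hC : Real.Gamma (5/2) ≠ 0 := (Real.Gamma_pos_of_pos (by norm_num)).ne'
  intro n hn
  match n, hn with
  | 1, _ =>
    have h1 := hf 1 le_rfl
    have h2 := hf 2 (by norm_num)
    have e1 : Real.Gamma ((1:ℕ):ℝ) = 1 := by
      norm_num [Real.Gamma_one]
    have e2 : Real.Gamma ((2:ℕ):ℝ) = 1 := by
      have : ((2:ℕ):ℝ) = 1 + 1 := by norm_num
      rw [this, Real.Gamma_add_one (by norm_num), Real.Gamma_one]; ring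
    have e3 : Real.Gamma (((2:ℕ):ℝ) + 3/2) = (5/2) * Real.Gamma (5/2) := by
      have : ((2:ℕ):ℝ) + 3/2 = 5/2 + 1 := by norm_num
      rw [this, Real.Gamma_add_one (by norm_num)]
    have e4 : (((1:ℕ):ℝ) + 3/2) = 5/2 := by norm_num
    rw [h1, h2] at *
    simp only [e1, e2, e3, e4]
    rw [hf0]
    field_simp
    ring
  | (m+2), _ =>
    set x : ℝ := (m : ℝ) with hx
    have hx0 : (0:ℝ) ≤ x := Nat.cast_nonneg m
    have hA : Real.Gamma (x + 5/2) ≠ 0 := (Real.Gamma_pos_of_pos (by linarith)).ne'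
    have hB : Real.Gamma (x + 1) ≠ 0 := (Real.Gamma_pos_of_pos (by linarith)).ne'
    have hx1 : x + 1 ≠ 0 := by linarith
    have hx2 : x + 2 ≠ 0 := by linarith
    have h1 := hf (m+1) (by omega)
    have h2 := hf (m+2) (by omega)
    have h3 := hf (m+3) (by omega)
    have c1 : ((m+1:ℕ):ℝ) = x + 1 := by push_cast [hx]; ring
    have c2 : ((m+2:ℕ):ℝ) = x + 2 := by push_cast [hx]; ring
    have c3 : ((m+3:ℕ):ℝ) = x + 3 := by push_cast [hx]; ring
    have g1 : Real.Gamma (x + 1 + 3/2) = Real.Gamma (x + 5/2) := by congr 1; ring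
    have g2 : Real.Gamma (x + 2 + 3/2) = (x + 5/2) * Real.Gamma (x + 5/2) := by
      have : x + 2 + 3/2 = (x + 5/2) + 1 := by ring
      rw [this, Real.Gamma_add_one (by linarith)]
    have g3 : Real.Gamma (x + 3 + 3/2) = (x + 7/2) * ((x + 5/2) * Real.Gamma (x + 5/2)) := by
      have : x + 3 + 3/2 = (x + 7/2) + 1 := by ring
      rw [this, Real.Gamma_add_one (by linarith), ← g2]
      congr 1; ring
    have g4 : Real.Gamma (x + 2) = (x + 1) * Real.Gamma (x + 1) := by
      have : x + 2 = (x + 1) + 1 := by ring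
      rw [this, Real.Gamma_add_one hx1]
    have g5 : Real.Gamma (x + 3) = (x + 2) * ((x + 1) * Real.Gamma (x + 1)) := by
      have : x + 3 = (x + 2) + 1 := by ring
      rw [this, Real.Gamma_add_one hx2, g4]
    rw [c1, g1] at h1
    rw [c2, g2, g4] at h2
    rw [c3, g3, g5] at h3
    have key : f (m+2+1) = f (m+3) := by norm_num
    have key2 : f (m+2-1) = f (m+1) := by norm_num
    rw [key, key2, h1, h2, h3, c2]
    field_simp
    ring
end
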